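/- arXiv:2508.08673 — 6 statements merged into one kernel-verified Lean document; each statement's English description precedes it below -/
import Mathlib

section
/- For all real x > 0, the inequality x·log(x) ≤ 2(x - √x) + max(√x, 1)·(√x - 1)² holds. -/
/-!
Put `t = √x`, so that `x log x = 2 t² log t`. For `t ≥ 1` the right-hand side equals
`t (t² - 1)` and the claim is `log t ≤ sinh (log t) = (t - t⁻¹) / 2`. For `t ≤ 1` it equals
`(3t - 1)(t - 1)`, and the claim follows from `log t ≤ 2 (t - 1) / (t + 1)`, i.e. from
`artanh y ≥ y`, because `4 t² ≥ (3t - 1)(t + 1)` is `(t - 1)² ≥ 0`.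
-/

open Real

lemma Real.two_mul_log_le_sub_inv {t : ℝ} (ht : 1 ≤ t) : 2 * log t ≤ t - t⁻¹ := by
  have := self_le_sinh_iff.mpr (log_nonneg ht)
  rw [sinh_log (by linarith)] at this
  linarith

lemma Real.log_le_two_mul_sub_one_div_add_one {t : ℝ} (ht0 : 0 < t) (ht1 : t ≤ 1) :
    log t ≤ 2 * (t - 1) / (t + 1) := by
  have h := le_log_one_add_of_nonneg (x := t⁻¹ - 1) (by linarith [one_le_inv_iff₀.mpr ⟨ht0, ht1⟩])
  rw [add_sub_cancel, log_inv] at h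
  have : 2 * (t⁻¹ - 1) / (t⁻¹ - 1 + 2) = -(2 * (t - 1) / (t + 1)) := by
    rw [show t⁻¹ - 1 + 2 = (t + 1) / t by field_simp; ring,
      show t⁻¹ - 1 = (1 - t) / t by field_simp]
    field_simp
    ring
  linarith

theorem xlogx_ineq (x : ℝ) (hx : 0 < x) :
    x * Real.log x ≤
      2 * (x - Real.sqrt x) + max (Real.sqrt x) 1 * (Real.sqrt x - 1) ^ 2 := by
  obtain ⟨t, ht0, rfl⟩ : ∃ t, 0 < t ∧ x = t ^ 2 := ⟨√x, sqrt_pos.mpr hx, (sq_sqrt hx.le).symm⟩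
  rw [sqrt_sq ht0.le, log_pow, Nat.cast_ofNat]
  rcases le_total 1 t with ht1 | ht1
  · rw [max_eq_left ht1]
    have hlog := mul_le_mul_of_nonneg_left (two_mul_log_le_sub_inv ht1) (sq_nonneg t)
    have hrhs : t ^ 2 * (t - t⁻¹) = t * (t ^ 2 - 1) := by field_simp
    linarith
  · rw [max_eq_right ht1]
    have hlog := mul_le_mul_of_nonneg_left (log_le_two_mul_sub_one_div_add_one ht0 ht1)
      (by positivity : (0 : ℝ) ≤ 2 * t ^ 2)
    have hrhs : 2 * t ^ 2 * (2 * (t - 1) / (t + 1)) =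
        2 * (t ^ 2 - t) + (t - 1) ^ 2 - (1 - t) ^ 3 / (t + 1) := by
      field_simp
      ring
    have hgap : 0 ≤ (1 - t) ^ 3 / (t + 1) := div_nonneg (pow_nonneg (by linarith) 3) (by linarith)
    linarith
end

section
/- Let Z be a random variable with values in a measurable space, and let p : Ω → [0,1] be measurable. Suppose there exist constants α ∈ [0,1) and C ≥ 1 such that P(p(Z) ≤ t) ≤ C·t^α for all t ∈ [0,1]. Then for any h ∈ (0,1], the integral of 1/p(z) over the set {p(z) ≥ h} with respect to the law of Z is at most C·h^{α-1}/(1-α). -/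
/-! By the layer-cake formula the integral is `∫₀^{1/h} μ(t < 1/p, p ≥ h) dt`, since
`1/p ≤ 1/h` on `{p ≥ h}`. For `t > 1` the small-value bound at `1/t` gives
`μ(t < 1/p) ≤ C t^{-α}`, and for `t ≤ 1` the trivial bound `1 ≤ C ≤ C t^{-α}` gives the same.
Hence the integral is at most `∫₀^{1/h} C t^{-α} dt = C h^{α-1} / (1 - α)`. -/

open MeasureTheory Set

theorem lintegral_ofReal_le_of_meas_lt_le {α : Type*} [MeasurableSpace α]
    {μ : Measure α} {f : α → ℝ} (hf_nn : 0 ≤ᵐ[μ] f) (hf : AEMeasurable f μ) {M : ℝ}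
    (hfM : ∀ᵐ x ∂μ, f x ≤ M) {g : ℝ → ENNReal} (hg : ∀ t ∈ Ioc 0 M, μ {x | t < f x} ≤ g t) :
    ∫⁻ x, ENNReal.ofReal (f x) ∂μ ≤ ∫⁻ t in Ioc 0 M, g t := by
  have h_tail : ∀ t ∈ Ioi (0 : ℝ), μ {x | t < f x} ≤ (Ioc 0 M).indicator g t := by
    intro t ht
    by_cases htM : t ≤ M
    · rw [indicator_of_mem (show t ∈ Ioc 0 M from ⟨ht, htM⟩)]
      exact hg t ⟨ht, htM⟩
    · rw [indicator_of_notMem fun h => htM h.2, nonpos_iff_eq_zero]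
      refine measure_mono_null (fun x (hx : t < f x) => ?_) (ae_iff.mp hfM)
      show ¬f x ≤ M
      linarith [not_le.mp htM]
  calc ∫⁻ x, ENNReal.ofReal (f x) ∂μ = ∫⁻ t in Ioi 0, μ {x | t < f x} :=
        lintegral_eq_lintegral_meas_lt μ hf_nn hf
    _ ≤ ∫⁻ t in Ioi 0, (Ioc 0 M).indicator g t := setLIntegral_mono' measurableSet_Ioi h_tail
    _ = ∫⁻ t in Ioc 0 M, g t := by
      rw [setLIntegral_indicator measurableSet_Ioc, inter_eq_left.mpr Ioc_subset_Ioi_self]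

theorem setLIntegral_Ioc_ofReal_rpow {r M : ℝ} (hr : -1 < r) (hM : 0 ≤ M) :
    ∫⁻ t in Ioc 0 M, ENNReal.ofReal (t ^ r) = ENNReal.ofReal (M ^ (r + 1) / (r + 1)) := by
  have h_int : IntegrableOn (fun t : ℝ => t ^ r) (Ioc 0 M) :=
    (intervalIntegrable_iff_integrableOn_Ioc_of_le hM).mp
      (intervalIntegral.intervalIntegrable_rpow' hr)
  have h_nn : 0 ≤ᵐ[volume.restrict (Ioc 0 M)] fun t : ℝ => t ^ r := by
    filter_upwards [ae_restrict_mem measurableSet_Ioc] with t ht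
    exact Real.rpow_nonneg ht.1.le r
  rw [← ofReal_integral_eq_lintegral_ofReal h_int h_nn, ← intervalIntegral.integral_of_le hM,
    integral_rpow (Or.inl hr), Real.zero_rpow (by linarith), sub_zero]

theorem measure_lt_one_div_le_of_small_value_bound {Ω : Type*} [MeasurableSpace Ω]
    {μ : Measure Ω} [IsProbabilityMeasure μ] {p : Ω → ℝ} {α C : ℝ}
    (hα0 : 0 ≤ α) (hC : 1 ≤ C)
    (hsvb : ∀ t ∈ Icc (0 : ℝ) 1, μ {ω | p ω ≤ t} ≤ ENNReal.ofReal (C * t ^ α))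
    {t : ℝ} (ht : 0 < t) :
    μ {ω | t < 1 / p ω} ≤ ENNReal.ofReal (C * t ^ (-α)) := by
  rcases le_or_gt t 1 with ht1 | ht1
  · have h_one : 1 ≤ t ^ (-α) :=
      Real.one_le_rpow_of_pos_of_le_one_of_nonpos ht ht1 (neg_nonpos.mpr hα0)
    calc μ {ω | t < 1 / p ω} ≤ 1 := prob_le_one
      _ ≤ ENNReal.ofReal (C * t ^ (-α)) :=
        ENNReal.one_le_ofReal.mpr (one_le_mul_of_one_le_of_one_le hC h_one)
  · have h_sub : {ω | t < 1 / p ω} ⊆ {ω | p ω ≤ t⁻¹} := fun ω (hω : t < 1 / p ω) => by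
      have hpos : 0 < p ω := one_div_pos.mp (ht.trans hω)
      rw [lt_one_div ht hpos, one_div] at hω
      exact hω.le
    calc μ {ω | t < 1 / p ω} ≤ μ {ω | p ω ≤ t⁻¹} := measure_mono h_sub
      _ ≤ ENNReal.ofReal (C * t⁻¹ ^ α) :=
        hsvb _ ⟨inv_nonneg.mpr ht.le, inv_le_one_of_one_le₀ ht1.le⟩
      _ = ENNReal.ofReal (C * t ^ (-α)) := by rw [Real.inv_rpow ht.le, Real.rpow_neg ht.le]

theorem small_value_bound_integral_lt_one_general {Ω : Type*} [MeasurableSpace Ω]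
    (μ : Measure Ω) [IsProbabilityMeasure μ]
    (p : Ω → ℝ) (hp : Measurable p)
    (α C : ℝ) (hα0 : 0 ≤ α) (hα1 : α < 1) (hC : 1 ≤ C)
    (hsvb : ∀ t ∈ Set.Icc (0:ℝ) 1, μ {ω | p ω ≤ t} ≤ ENNReal.ofReal (C * t ^ α))
    (h : ℝ) (hh : h ∈ Set.Ioc (0:ℝ) 1) :
    ∫ ω in {ω | h ≤ p ω}, 1 / p ω ∂μ ≤ C * h ^ (α - 1) / (1 - α) := by
  have hh0 : 0 < h := hh.1
  have hs : MeasurableSet {ω | h ≤ p ω} := measurableSet_le measurable_const hp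
  have h_mem : ∀ᵐ ω ∂μ.restrict {ω | h ≤ p ω}, h ≤ p ω := ae_restrict_mem hs
  have h_nn : 0 ≤ᵐ[μ.restrict {ω | h ≤ p ω}] fun ω => 1 / p ω :=
    h_mem.mono fun ω hω => one_div_nonneg.mpr (hh0.le.trans hω)
  have h_le : ∀ᵐ ω ∂μ.restrict {ω | h ≤ p ω}, 1 / p ω ≤ 1 / h :=
    h_mem.mono fun ω hω => one_div_le_one_div_of_le hh0 hω
  have hf : Measurable fun ω => 1 / p ω := measurable_const.div hp
  rw [integral_eq_lintegral_of_nonneg_ae h_nn hf.aestronglyMeasurable]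
  have h_bound_nn : 0 ≤ C * h ^ (α - 1) / (1 - α) :=
    div_nonneg (mul_nonneg (by linarith) (Real.rpow_nonneg hh0.le _)) (by linarith)
  refine ENNReal.toReal_le_of_le_ofReal h_bound_nn ?_
  calc ∫⁻ ω in {ω | h ≤ p ω}, ENNReal.ofReal (1 / p ω) ∂μ
      ≤ ∫⁻ t in Ioc 0 (1 / h), ENNReal.ofReal C * ENNReal.ofReal (t ^ (-α)) := by
        refine lintegral_ofReal_le_of_meas_lt_le h_nn hf.aemeasurable h_le
          fun t ht => ?_
        rw [← ENNReal.ofReal_mul (by linarith)]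
        exact (Measure.restrict_apply_le _ _).trans
          (measure_lt_one_div_le_of_small_value_bound hα0 hC hsvb ht.1)
    _ = ENNReal.ofReal C * ENNReal.ofReal ((1 / h) ^ (-α + 1) / (-α + 1)) := by
        rw [lintegral_const_mul' _ _ ENNReal.ofReal_ne_top,
          setLIntegral_Ioc_ofReal_rpow (by linarith) (by positivity)]
    _ = ENNReal.ofReal (C * h ^ (α - 1) / (1 - α)) := by
        rw [← ENNReal.ofReal_mul (by linarith), one_div, Real.inv_rpow hh0.le,
          ← Real.rpow_neg hh0.le, mul_div_assoc]
        ring_nf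

theorem small_value_bound_integral_lt_one {Ω : Type*} [MeasurableSpace Ω]
    (μ : Measure Ω) [IsProbabilityMeasure μ]
    (p : Ω → ℝ) (hp : Measurable p) (hp01 : ∀ ω, p ω ∈ Set.Icc (0:ℝ) 1)
    (α C : ℝ) (hα0 : 0 ≤ α) (hα1 : α < 1) (hC : 1 ≤ C)
    (hsvb : ∀ t ∈ Set.Icc (0:ℝ) 1, μ {ω | p ω ≤ t} ≤ ENNReal.ofReal (C * t ^ α))
    (h : ℝ) (hh : h ∈ Set.Ioc (0:ℝ) 1) :
    ∫ ω in {ω | h ≤ p ω}, 1 / p ω ∂μ ≤ C * h ^ (α - 1) / (1 - α) :=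
  small_value_bound_integral_lt_one_general μ p hp α C hα0 hα1 hC hsvb h hh
end

section
/- Let Z be a random variable and p : Ω → [0,1] measurable. Suppose there exists a constant C ≥ 1 such that P(p(Z) ≤ t) ≤ C·t for all t ∈ [0,1]. Then for any h ∈ (0,1], the integral of 1/p(z) over the set {p(z) ≥ h} with respect to the law of Z is at most C·(1 - log h). -/
/-!
Layer cake: on `{h ≤ p}` the function `1 / p` takes values in `(0, 1/h]`, so its integral is
`∫₀^{1/h} P(h ≤ p, t ≤ 1/p) dt`. The integrand is at most `1`, and for `t ≥ 1` the event lies in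
`{p ≤ 1/t}`, of probability at most `C/t`. Hence the integral is at most
`1 + C log (1/h) ≤ C (1 - log h)`.
-/

open MeasureTheory Set Real

lemma setIntegral_Ioc_le_add_mul_log {g : ℝ → ℝ} {B C T : ℝ} (hT : 1 ≤ T)
    (hg : IntegrableOn g (Ioc 0 T)) (hg_small : ∀ t ∈ Ioc 0 1, g t ≤ B)
    (hg_large : ∀ t ∈ Ioc 1 T, g t ≤ C * t⁻¹) :
    ∫ t in Ioc 0 T, g t ≤ B + C * log T := by
  rw [← Ioc_union_Ioc_eq_Ioc zero_le_one hT] at hg ⊢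
  have hinv : IntegrableOn (fun t : ℝ ↦ C * t⁻¹) (Ioc 1 T) := by
    rw [← intervalIntegrable_iff_integrableOn_Ioc_of_le hT]
    exact (intervalIntegrable_inv_iff.2
      (.inr (notMem_uIcc_of_lt zero_lt_one (by linarith)))).const_mul C
  have hsmall : ∫ t in Ioc 0 1, g t ≤ B :=
    calc ∫ t in Ioc 0 1, g t ≤ ∫ _ in Ioc (0 : ℝ) 1, B :=
          setIntegral_mono_on hg.left_of_union (integrableOn_const measure_Ioc_lt_top.ne)
            measurableSet_Ioc hg_small
      _ = B := by simp
  have hlarge : ∫ t in Ioc 1 T, g t ≤ C * log T :=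
    calc ∫ t in Ioc 1 T, g t ≤ ∫ t in Ioc 1 T, C * t⁻¹ :=
          setIntegral_mono_on hg.right_of_union hinv measurableSet_Ioc hg_large
      _ = C * log T := by
          rw [← intervalIntegral.integral_of_le hT, intervalIntegral.integral_const_mul,
            integral_inv_of_pos zero_lt_one (by linarith), div_one]
  rw [setIntegral_union (Ioc_disjoint_Ioc_of_le le_rfl) measurableSet_Ioc hg.left_of_union
    hg.right_of_union]
  linarith

lemma setOf_le_one_div_inter_subset {Ω : Type*} {p : Ω → ℝ} {h t : ℝ} (hh : 0 < h)
    (ht : 0 < t) : {ω | t ≤ 1 / p ω} ∩ {ω | h ≤ p ω} ⊆ {ω | p ω ≤ t⁻¹} := by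
  rintro ω ⟨htp : t ≤ 1 / p ω, hhp : h ≤ p ω⟩
  rw [one_div] at htp
  exact (le_inv_comm₀ ht (hh.trans_le hhp)).1 htp

lemma measureReal_restrict_setOf_le_one_div_le {Ω : Type*} [MeasurableSpace Ω]
    {μ : Measure Ω} [IsFiniteMeasure μ] {p : Ω → ℝ} (hp : Measurable p) {h t : ℝ}
    (hh : 0 < h) (ht : 0 < t) :
    (μ.restrict {ω | h ≤ p ω}).real {ω | t ≤ 1 / p ω} ≤ μ.real {ω | p ω ≤ t⁻¹} := by
  rw [measureReal_restrict_apply (measurableSet_le measurable_const (hp.const_div 1))]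
  exact measureReal_mono (setOf_le_one_div_inter_subset hh ht)

theorem small_value_bound_integral_alpha_one_general {Ω : Type*} [MeasurableSpace Ω]
    (μ : Measure Ω) [IsProbabilityMeasure μ]
    (p : Ω → ℝ) (hp : Measurable p)
    (C : ℝ) (hC : 1 ≤ C)
    (hsvb : ∀ t ∈ Set.Icc (0:ℝ) 1, μ {ω | p ω ≤ t} ≤ ENNReal.ofReal (C * t))
    (h : ℝ) (hh : h ∈ Set.Ioc (0:ℝ) 1) :
    ∫ ω in {ω | h ≤ p ω}, 1 / p ω ∂μ ≤ C * (1 - Real.log h) := by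
  obtain ⟨hh0, hh1⟩ := hh
  set s := {ω | h ≤ p ω}
  have hs : MeasurableSet s := measurableSet_le measurable_const hp
  have hinv_mem : ∀ᵐ ω ∂μ.restrict s, 0 ≤ 1 / p ω ∧ 1 / p ω ≤ h⁻¹ := by
    filter_upwards [ae_restrict_mem hs] with ω (hω : h ≤ p ω)
    have hpω : 0 < p ω := hh0.trans_le hω
    exact ⟨by positivity, by rw [one_div]; exact inv_anti₀ hh0 hω⟩
  have hint : Integrable (fun ω ↦ 1 / p ω) (μ.restrict s) :=
    .of_bound (hp.const_div 1).aestronglyMeasurable h⁻¹ <| hinv_mem.mono fun _ hω ↦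
      (abs_of_nonneg hω.1).trans_le hω.2
  rw [hint.integral_eq_integral_Ioc_meas_le
    (hinv_mem.mono fun _ ↦ And.left) (hinv_mem.mono fun _ ↦ And.right)]
  have htail_int : IntegrableOn (fun t ↦ (μ.restrict s).real {ω | t ≤ 1 / p ω}) (Ioc 0 h⁻¹) :=
    (intervalIntegrable_iff_integrableOn_Ioc_of_le (by positivity)).1
      (Antitone.intervalIntegrable fun _ _ hst ↦ measureReal_mono fun _ ↦ hst.trans)
  calc _ ≤ 1 + C * log h⁻¹ := by
        refine setIntegral_Ioc_le_add_mul_log ((one_le_inv₀ hh0).2 hh1) htail_int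
          (fun t _ ↦ (ENNReal.toReal_mono (measure_ne_top μ _)
            (Measure.restrict_apply_le _ _)).trans measureReal_le_one) fun t ht ↦ ?_
        have ht0 : 0 < t := zero_lt_one.trans ht.1
        refine (measureReal_restrict_setOf_le_one_div_le hp hh0 ht0).trans
          (ENNReal.toReal_le_of_le_ofReal (by positivity) (hsvb _ ⟨by positivity, ?_⟩))
        exact inv_le_one_of_one_le₀ ht.1.le
    _ ≤ C * (1 - log h) := by
        rw [log_inv]
        linarith

theorem small_value_bound_integral_alpha_one {Ω : Type*} [MeasurableSpace Ω]
    (μ : Measure Ω) [IsProbabilityMeasure μ]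
    (p : Ω → ℝ) (hp : Measurable p) (hp01 : ∀ ω, p ω ∈ Set.Icc (0:ℝ) 1)
    (C : ℝ) (hC : 1 ≤ C)
    (hsvb : ∀ t ∈ Set.Icc (0:ℝ) 1, μ {ω | p ω ≤ t} ≤ ENNReal.ofReal (C * t))
    (h : ℝ) (hh : h ∈ Set.Ioc (0:ℝ) 1) :
    ∫ ω in {ω | h ≤ p ω}, 1 / p ω ∂μ ≤ C * (1 - Real.log h) :=
  small_value_bound_integral_alpha_one_general μ p hp C hC hsvb h hh
end

section
/- For probability measures P and Q on the same measurable space, the squared Hellinger distance is bounded by half the 2-truncated KL divergence: H²(P,Q) ≤ (1/2)·KL₂(P‖Q), where KL_B(P‖Q) = ∫ min(B, log(dP/dQ)) dP (with the convention that the log-ratio is +∞ on the part of P singular to Q). -/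
/-!
With `f = dP/dQ` and `s = Pˢ(Ω)` the mass of the singular part, `∫ f dQ = 1 - s`, so
`H²(P,Q) = s + ∫ (f - √f) dQ` while `KL₂(P‖Q) = ∫ f min(2, log f) dQ + 2s`. The claim thus
reduces to the scalar inequality `t - √t ≤ ½ t min(2, log t)` for `t ≥ 0`, integrated against `Q`.
-/

open MeasureTheory

/-- Squared Hellinger distance: `H²(P,Q) = 1 - ∫ √(dP dQ)`, computed with respect to
the dominating measure `P + Q`. -/
noncomputable def hellingerSq {Ω : Type*} [MeasurableSpace Ω] (P Q : Measure Ω) : ℝ :=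
  1 - ∫ z, Real.sqrt ((P.rnDeriv (P + Q) z).toReal * (Q.rnDeriv (P + Q) z).toReal) ∂(P + Q)

/-- Truncated KL divergence `KL_B(P‖Q) = ∫ min(B, log(dP/dQ)) dP`, interpreted via the
Lebesgue decomposition `P = Pᵃ + Pˢ` with `Pᵃ ≪ Q`: the log-ratio is `+∞` on the singular
part, so the integrand there equals `B`. -/
noncomputable def klTrunc {Ω : Type*} [MeasurableSpace Ω] (B : ℝ) (P Q : Measure Ω) : ℝ :=
  (∫ z, min B (Real.log ((P.rnDeriv Q z).toReal)) ∂(Q.withDensity (P.rnDeriv Q)))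
    + B * (P.singularPart Q Set.univ).toReal

namespace Real

lemma sqrt_le_abs_add_one (y : ℝ) : √y ≤ |y| + 1 := by
  rcases le_or_gt 0 y with hy | hy
  · nlinarith [sq_sqrt hy, sqrt_nonneg y, le_abs_self y]
  · rw [sqrt_eq_zero_of_nonpos hy.le]
    positivity

lemma abs_mul_min_log_le {t : ℝ} (ht : 0 ≤ t) (B : ℝ) : |t * min B (log t)| ≤ |B| * t + 1 := by
  have hmul_log : t - 1 ≤ t * log t := self_sub_one_le_mul_log ht
  have hB : -(|B| * t) ≤ t * B := by nlinarith [neg_abs_le B]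
  rw [mul_min_of_nonneg _ _ ht, abs_le]
  constructor
  · exact le_min (by linarith) (by linarith [mul_nonneg (abs_nonneg B) ht])
  · exact min_le_of_left_le (by nlinarith [le_abs_self B])

/-- With `s = √t`, the bound `t - √t ≤ ½ t log t` is `s (s - 1) ≤ s² log s`. -/
lemma sub_sqrt_le_half_mul_min_two_log {t : ℝ} (ht : 0 ≤ t) :
    t - √t ≤ 1 / 2 * (t * min 2 (log t)) := by
  rw [mul_min_of_nonneg _ _ ht, mul_min_of_nonneg _ _ (by norm_num)]
  refine le_min (by linarith [sqrt_nonneg t]) ?_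
  have hs : √t * √t = t := mul_self_sqrt ht
  have hlog : log t = 2 * log √t := by rw [log_sqrt ht]; ring
  have := mul_le_mul_of_nonneg_left (self_sub_one_le_mul_log (sqrt_nonneg t)) (sqrt_nonneg t)
  rw [← mul_assoc, hs] at this
  rw [hlog]
  linarith

end Real

section Integrability

variable {α : Type*} [MeasurableSpace α] {μ : Measure α} [IsFiniteMeasure μ] {f : α → ℝ}

lemma MeasureTheory.Integrable.sqrt (hf : Integrable f μ) : Integrable (fun x => √(f x)) μ :=
  (hf.norm.add (integrable_const 1)).mono' (Real.continuous_sqrt.comp_aestronglyMeasurable hf.1)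
    (.of_forall fun x => by
      simpa [abs_of_nonneg (Real.sqrt_nonneg _)] using Real.sqrt_le_abs_add_one (f x))

lemma MeasureTheory.Integrable.mul_min_log (hf : Integrable f μ) (hf_nonneg : 0 ≤ f) (B : ℝ) :
    Integrable (fun x => f x * min B (Real.log (f x))) μ :=
  ((hf.const_mul |B|).add (integrable_const 1)).mono'
    (hf.1.aemeasurable.mul (aemeasurable_const.min
      (Real.measurable_log.comp_aemeasurable hf.1.aemeasurable))).aestronglyMeasurable
    (.of_forall fun x => Real.abs_mul_min_log_le (hf_nonneg x) B)

end Integrability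

namespace MeasureTheory.Measure

variable {Ω : Type*} [MeasurableSpace Ω] {P Q : Measure Ω}

/-- Where `dQ/dμ ≠ 0` the chain rule gives `dP/dμ = (dP/dQ)(dQ/dμ)`; where it vanishes both
integrands vanish. -/
lemma integral_sqrt_rnDeriv_mul_rnDeriv [SigmaFinite P] [SigmaFinite Q] {μ : Measure Ω}
    [SigmaFinite μ] (hQμ : Q ≪ μ) :
    ∫ z, √((P.rnDeriv μ z).toReal * (Q.rnDeriv μ z).toReal) ∂μ
      = ∫ z, √((P.rnDeriv Q z).toReal) ∂Q := by
  rw [← integral_rnDeriv_smul hQμ]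
  have hchain : ∀ᵐ x ∂μ, Q.rnDeriv μ x ≠ 0 →
      P.rnDeriv Q x * Q.rnDeriv μ x = P.rnDeriv μ x := by
    rw [← ae_withDensity_iff (measurable_rnDeriv Q μ), withDensity_rnDeriv_eq Q μ hQμ]
    exact rnDeriv_mul_rnDeriv' hQμ
  refine integral_congr_ae ?_
  filter_upwards [hchain] with x hx
  by_cases hQx : Q.rnDeriv μ x = 0
  · simp [hQx]
  · rw [← hx hQx, ENNReal.toReal_mul, mul_assoc, smul_eq_mul,
      Real.sqrt_mul ENNReal.toReal_nonneg, Real.sqrt_mul_self ENNReal.toReal_nonneg, mul_comm]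

end MeasureTheory.Measure

lemma hellingerSq_eq_one_sub_integral_sqrt_rnDeriv {Ω : Type*} [MeasurableSpace Ω]
    (P Q : Measure Ω) [SigmaFinite P] [SigmaFinite Q] :
    hellingerSq P Q = 1 - ∫ z, √((P.rnDeriv Q z).toReal) ∂Q := by
  rw [hellingerSq, Measure.integral_sqrt_rnDeriv_mul_rnDeriv
    (Measure.absolutelyContinuous_of_le (Measure.le_add_left le_rfl))]

lemma klTrunc_eq_integral_mul_min_log {Ω : Type*} [MeasurableSpace Ω] (B : ℝ)
    (P Q : Measure Ω) [SigmaFinite P] :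
    klTrunc B P Q = ∫ z, (P.rnDeriv Q z).toReal * min B (Real.log (P.rnDeriv Q z).toReal) ∂Q
      + B * (P.singularPart Q Set.univ).toReal := by
  rw [klTrunc, integral_withDensity_eq_integral_toReal_smul (Measure.measurable_rnDeriv P Q)
    (Measure.rnDeriv_lt_top P Q)]
  rfl

/-- `H²(P,Q) ≤ (1/2)·KL₂(P‖Q)`. -/
theorem hellingerSq_le_half_klTrunc_two {Ω : Type*} [MeasurableSpace Ω]
    (P Q : Measure Ω) [IsProbabilityMeasure P] [IsProbabilityMeasure Q] :
    hellingerSq P Q ≤ (1 / 2) * klTrunc 2 P Q := by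
  set f : Ω → ℝ := fun z => (P.rnDeriv Q z).toReal
  have hf : Integrable f Q := Measure.integrable_toReal_rnDeriv
  have hf_nonneg : 0 ≤ f := fun _ => ENNReal.toReal_nonneg
  have hmass : ∫ z, f z ∂Q = 1 - (P.singularPart Q Set.univ).toReal := by
    simpa [f, measureReal_def] using Measure.integral_toReal_rnDeriv' (μ := P) (ν := Q)
  have hpointwise : ∫ z, (f z - √(f z)) ∂Q ≤ ∫ z, 1 / 2 * (f z * min 2 (Real.log (f z))) ∂Q :=
    integral_mono (hf.sub hf.sqrt) ((hf.mul_min_log hf_nonneg 2).const_mul _)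
      fun z => Real.sub_sqrt_le_half_mul_min_two_log (hf_nonneg z)
  rw [integral_sub hf hf.sqrt, integral_const_mul, hmass] at hpointwise
  rw [hellingerSq_eq_one_sub_integral_sqrt_rnDeriv, klTrunc_eq_integral_mul_min_log]
  linarith
end

section
/- For probability measures P, Q with P ≪ Q and density ratio bounded: if dP/dQ ≤ e^B Q-a.e. fails only on a set, then the P-mass of the set where dP/dQ > e^B is controlled by Hellinger distance: ∫_{dP/dQ > e^B} dP ≤ 2(1 − e^{−B/2})^{−2} H²(P,Q), for any B > 0. -/
/-!
Write `p`, `q` for the densities of `P`, `Q` with respect to `P + Q`. Where `dP/dQ > e^B` we have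
`q ≤ e^{-B} p`, hence `(√p - √q)² ≥ (1 - e^{-B/2})² p`; integrating this over that set and
comparing with `∫ (√p - √q)² = 2 H²(P, Q)` gives the bound.
-/

open MeasureTheory

lemma Real.sq_sqrt_sub_sqrt {a b : ℝ} (ha : 0 ≤ a) (hb : 0 ≤ b) :
    (√a - √b) ^ 2 = a + b - 2 * √(a * b) := by
  rw [sub_sq, Real.sq_sqrt ha, Real.sq_sqrt hb, Real.sqrt_mul ha]
  ring

lemma Real.sqrt_mul_le_add {a b : ℝ} (ha : 0 ≤ a) (hb : 0 ≤ b) : √(a * b) ≤ a + b := by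
  rw [Real.sqrt_le_left (by positivity)]
  nlinarith

lemma Real.one_sub_sq_mul_le_sq_sqrt_sub_sqrt {a b s : ℝ} (ha : 0 ≤ a) (hs₀ : 0 ≤ s)
    (hs₁ : s ≤ 1) (hba : b ≤ s ^ 2 * a) : (1 - s) ^ 2 * a ≤ (√a - √b) ^ 2 := by
  have hb : √b ≤ s * √a := by
    calc √b ≤ √(s ^ 2 * a) := Real.sqrt_le_sqrt hba
      _ = s * √a := by rw [Real.sqrt_mul (sq_nonneg s), Real.sqrt_sq hs₀]
  calc (1 - s) ^ 2 * a = ((1 - s) * √a) ^ 2 := by rw [mul_pow, Real.sq_sqrt ha]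
    _ ≤ (√a - √b) ^ 2 :=
      pow_le_pow_left₀ (mul_nonneg (by linarith) (Real.sqrt_nonneg a)) (by linarith) 2

section Hellinger

variable {Ω : Type*} [MeasurableSpace Ω] (P Q : Measure Ω)

lemma integrable_sqrt_mul_toReal_rnDeriv [IsFiniteMeasure P] [IsFiniteMeasure Q]
    (ν : Measure Ω) :
    Integrable (fun z ↦ √((P.rnDeriv ν z).toReal * (Q.rnDeriv ν z).toReal)) ν := by
  refine ((Measure.integrable_toReal_rnDeriv (μ := P)).add
    (Measure.integrable_toReal_rnDeriv (μ := Q))).mono' ?_ (.of_forall fun z ↦ ?_)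
  · exact (((P.measurable_rnDeriv _).ennreal_toReal.mul
      (Q.measurable_rnDeriv _).ennreal_toReal).sqrt).aestronglyMeasurable
  · rw [Real.norm_of_nonneg (Real.sqrt_nonneg _)]
    exact Real.sqrt_mul_le_add ENNReal.toReal_nonneg ENNReal.toReal_nonneg

lemma integrable_sq_sqrt_sub_sqrt_toReal_rnDeriv [IsFiniteMeasure P] [IsFiniteMeasure Q]
    (ν : Measure Ω) :
    Integrable (fun z ↦ (√(P.rnDeriv ν z).toReal - √(Q.rnDeriv ν z).toReal) ^ 2) ν := by
  simp_rw [Real.sq_sqrt_sub_sqrt ENNReal.toReal_nonneg ENNReal.toReal_nonneg]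
  exact (Measure.integrable_toReal_rnDeriv.add Measure.integrable_toReal_rnDeriv).sub
    ((integrable_sqrt_mul_toReal_rnDeriv P Q ν).const_mul 2)

lemma integral_sq_sqrt_sub_sqrt_rnDeriv [IsProbabilityMeasure P] [IsProbabilityMeasure Q] :
    ∫ z, (√(P.rnDeriv (P + Q) z).toReal - √(Q.rnDeriv (P + Q) z).toReal) ^ 2 ∂(P + Q) =
      2 * hellingerSq P Q := by
  have hP : P ≪ P + Q := Measure.absolutelyContinuous_of_le (Measure.le_add_right le_rfl)
  have hQ : Q ≪ P + Q := Measure.absolutelyContinuous_of_le (Measure.le_add_left le_rfl)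
  have hiP : Integrable (fun z ↦ (P.rnDeriv (P + Q) z).toReal) (P + Q) :=
    Measure.integrable_toReal_rnDeriv
  have hiQ : Integrable (fun z ↦ (Q.rnDeriv (P + Q) z).toReal) (P + Q) :=
    Measure.integrable_toReal_rnDeriv
  simp_rw [Real.sq_sqrt_sub_sqrt ENNReal.toReal_nonneg ENNReal.toReal_nonneg]
  rw [integral_sub (f := fun z ↦ _ + _) (hiP.add hiQ)
      ((integrable_sqrt_mul_toReal_rnDeriv P Q _).const_mul 2),
    integral_add hiP hiQ, Measure.integral_toReal_rnDeriv hP, Measure.integral_toReal_rnDeriv hQ,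
    integral_const_mul, hellingerSq, probReal_univ, probReal_univ]
  ring

lemma one_sub_sq_mul_measure_le_two_mul_hellingerSq [IsProbabilityMeasure P]
    [IsProbabilityMeasure Q] {S : Set Ω} {s : ℝ} (hs₀ : 0 ≤ s) (hs₁ : s ≤ 1)
    (hS : ∀ᵐ z ∂(P + Q).restrict S,
      (Q.rnDeriv (P + Q) z).toReal ≤ s ^ 2 * (P.rnDeriv (P + Q) z).toReal) :
    (1 - s) ^ 2 * (P S).toReal ≤ 2 * hellingerSq P Q := by
  have hP : P ≪ P + Q := Measure.absolutelyContinuous_of_le (Measure.le_add_right le_rfl)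
  set f : Ω → ℝ := fun z ↦
    (√(P.rnDeriv (P + Q) z).toReal - √(Q.rnDeriv (P + Q) z).toReal) ^ 2
  have hf : Integrable f (P + Q) := integrable_sq_sqrt_sub_sqrt_toReal_rnDeriv P Q _
  calc (1 - s) ^ 2 * (P S).toReal
      = ∫ z in S, (1 - s) ^ 2 * (P.rnDeriv (P + Q) z).toReal ∂(P + Q) := by
        rw [integral_const_mul, Measure.setIntegral_toReal_rnDeriv hP, measureReal_def]
    _ ≤ ∫ z in S, f z ∂(P + Q) :=
        integral_mono_ae (Measure.integrable_toReal_rnDeriv.const_mul _).integrableOn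
          hf.integrableOn (hS.mono fun z hz ↦
            Real.one_sub_sq_mul_le_sq_sqrt_sub_sqrt ENNReal.toReal_nonneg hs₀ hs₁ hz)
    _ ≤ ∫ z, f z ∂(P + Q) := setIntegral_le_integral hf (.of_forall fun z ↦ sq_nonneg _)
    _ = 2 * hellingerSq P Q := integral_sq_sqrt_sub_sqrt_rnDeriv P Q

end Hellinger

lemma MeasureTheory.Measure.ae_mul_toReal_rnDeriv_le {α : Type*} [MeasurableSpace α]
    {μ ν κ : Measure α} [SigmaFinite μ] [SigmaFinite ν] [SigmaFinite κ] (hμν : μ ≪ ν)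
    (t : ℝ) :
    ∀ᵐ z ∂κ, t ≤ (μ.rnDeriv ν z).toReal →
      t * (ν.rnDeriv κ z).toReal ≤ (μ.rnDeriv κ z).toReal := by
  filter_upwards [Measure.rnDeriv_mul_rnDeriv (κ := κ) hμν] with z hz ht
  rw [← hz, Pi.mul_apply, ENNReal.toReal_mul]
  exact mul_le_mul_of_nonneg_right ht ENNReal.toReal_nonneg

/-- The `P`-mass of the set where `dP/dQ > e^B` is controlled by the Hellinger distance. -/
theorem mass_large_ratio_le_hellinger {Ω : Type*} [MeasurableSpace Ω]
    (P Q : Measure Ω) [IsProbabilityMeasure P] [IsProbabilityMeasure Q]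
    (hPQ : P ≪ Q) (B : ℝ) (hB : 0 < B) :
    (P {z | Real.exp B < (P.rnDeriv Q z).toReal}).toReal ≤
      2 * ((1 - Real.exp (-B / 2))⁻¹) ^ 2 * hellingerSq P Q := by
  set S := {z | Real.exp B < (P.rnDeriv Q z).toReal}
  set s := Real.exp (-B / 2)
  have hs₁ : s < 1 := Real.exp_lt_one_iff.mpr (by linarith)
  have hs_sq : s ^ 2 * Real.exp B = 1 := by
    rw [← Real.exp_nat_mul, ← Real.exp_add, Real.exp_eq_one_iff]
    push_cast
    ring
  have hS : ∀ᵐ z ∂(P + Q).restrict S,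
      (Q.rnDeriv (P + Q) z).toReal ≤ s ^ 2 * (P.rnDeriv (P + Q) z).toReal := by
    have hSm : MeasurableSet S :=
      measurableSet_lt measurable_const (P.measurable_rnDeriv Q).ennreal_toReal
    filter_upwards [ae_restrict_of_ae (Measure.ae_mul_toReal_rnDeriv_le (κ := P + Q) hPQ
      (Real.exp B)), ae_restrict_mem hSm] with z hz hzS
    have := mul_le_mul_of_nonneg_left (hz hzS.le) (sq_nonneg s)
    rwa [← mul_assoc, hs_sq, one_mul] at this
  have hbound := one_sub_sq_mul_measure_le_two_mul_hellingerSq P Q (Real.exp_pos _).le hs₁.le hS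
  rw [inv_pow, mul_right_comm, ← div_eq_mul_inv, le_div_iff₀ (pow_pos (sub_pos.mpr hs₁) 2)]
  linarith
end

section
/- Consider compositions of affine maps and ReLU layers: let f, g : ℝ^K → ℝ^K be networks of depth L with identical architecture, widths bounded by W, with all weight matrices and bias vectors entrywise bounded by 1, and suppose corresponding parameters of f and g differ entrywise by at most δ. Then on the unit cube, ‖f(x) − g(x)‖_∞ ≤ L·(W+1)^L·δ. -/
/-!
Bound the activations of one network by induction, `|h'_k| ≤ (W+1)^k`, since a layer with
entries in `[-1, 1]` maps a vector of sup-norm `M` to one of sup-norm at most `W M + 1`. Then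
`A h_k - A' h'_k = A (h_k - h'_k) + (A - A') h'_k` propagates the error `D_k` of layer `k` to
`W (D_k + δ (W+1)^k) + δ` at layer `k + 1`; since ReLU is 1-Lipschitz, `D_k ≤ k (W+1)^k δ`
follows by induction, and the last (affine) layer gives the claim.
-/

/-- Hidden-layer evaluation: `hiddenEval w A b k x` is the output after `k` affine layers,
each followed by a coordinatewise ReLU. -/
noncomputable def hiddenEval (w : ℕ → ℕ)
    (A : ∀ k : ℕ, Matrix (Fin (w (k + 1))) (Fin (w k)) ℝ)
    (b : ∀ k : ℕ, Fin (w (k + 1)) → ℝ) :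
    ∀ k : ℕ, (Fin (w 0) → ℝ) → Fin (w k) → ℝ
  | 0 => fun x => x
  | (k + 1) => fun x i => max ((A k).mulVec (hiddenEval w A b k x) i + b k i) 0

/-- Network evaluation with `L` affine layers and ReLU activations between them
(no ReLU after the last affine layer). -/
noncomputable def netEval (w : ℕ → ℕ)
    (A : ∀ k : ℕ, Matrix (Fin (w (k + 1))) (Fin (w k)) ℝ)
    (b : ∀ k : ℕ, Fin (w (k + 1)) → ℝ) :
    ∀ L : ℕ, (Fin (w 0) → ℝ) → Fin (w L) → ℝ
  | 0 => fun x => x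
  | (L + 1) => fun x => (A L).mulVec (hiddenEval w A b L x) + b L

open Matrix Finset

namespace Matrix

variable {ι κ : Type*} [Fintype κ]

theorem abs_mulVec_apply_le {A : Matrix ι κ ℝ} {v : κ → ℝ} {a M : ℝ}
    (hA : ∀ i j, |A i j| ≤ a) (hv : ∀ j, |v j| ≤ M) (i : ι) :
    |(A *ᵥ v) i| ≤ Fintype.card κ * (a * M) :=
  calc |(A *ᵥ v) i| = |∑ j, A i j * v j| := rfl
    _ ≤ ∑ j, |A i j * v j| := abs_sum_le_sum_abs _ _
    _ ≤ ∑ _j : κ, a * M := sum_le_sum fun j _ => by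
      rw [abs_mul]
      exact mul_le_mul (hA i j) (hv j) (abs_nonneg _) ((abs_nonneg _).trans (hA i j))
    _ = Fintype.card κ * (a * M) := by simp

theorem abs_mulVec_sub_mulVec_apply_le {A A' : Matrix ι κ ℝ} {v v' : κ → ℝ} {a δ M D : ℝ}
    (hA : ∀ i j, |A i j| ≤ a) (hdA : ∀ i j, |A i j - A' i j| ≤ δ)
    (hv' : ∀ j, |v' j| ≤ M) (hdv : ∀ j, |v j - v' j| ≤ D) (i : ι) :
    |(A *ᵥ v) i - (A' *ᵥ v') i| ≤ Fintype.card κ * (a * D + δ * M) := by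
  have hsplit : A *ᵥ v - A' *ᵥ v' = A *ᵥ (v - v') + (A - A') *ᵥ v' := by
    rw [mulVec_sub, sub_mulVec]; abel
  calc |(A *ᵥ v) i - (A' *ᵥ v') i| = |(A *ᵥ (v - v')) i + ((A - A') *ᵥ v') i| := by
        rw [← Pi.sub_apply, hsplit, Pi.add_apply]
    _ ≤ |(A *ᵥ (v - v')) i| + |((A - A') *ᵥ v') i| := abs_add_le _ _
    _ ≤ Fintype.card κ * (a * D) + Fintype.card κ * (δ * M) :=
        add_le_add (abs_mulVec_apply_le hA hdv i) (abs_mulVec_apply_le hdA hv' i)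
    _ = Fintype.card κ * (a * D + δ * M) := by ring

end Matrix

section Network

variable {w : ℕ → ℕ} {A A' : ∀ k : ℕ, Matrix (Fin (w (k + 1))) (Fin (w k)) ℝ}
  {b b' : ∀ k : ℕ, Fin (w (k + 1)) → ℝ} {x : Fin (w 0) → ℝ} {W L : ℕ} {δ : ℝ}

noncomputable def preActivation (w : ℕ → ℕ)
    (A : ∀ k : ℕ, Matrix (Fin (w (k + 1))) (Fin (w k)) ℝ)
    (b : ∀ k : ℕ, Fin (w (k + 1)) → ℝ) (k : ℕ) (x : Fin (w 0) → ℝ) : Fin (w (k + 1)) → ℝ :=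
  A k *ᵥ hiddenEval w A b k x + b k

theorem hiddenEval_succ_apply (k : ℕ) (i : Fin (w (k + 1))) :
    hiddenEval w A b (k + 1) x i = max (preActivation w A b k x i) 0 :=
  rfl

theorem netEval_succ (k : ℕ) : netEval w A b (k + 1) x = preActivation w A b k x :=
  rfl

theorem abs_hiddenEval_le (hw : ∀ k < L, w k ≤ W) (hA : ∀ k < L, ∀ i j, |A k i j| ≤ 1)
    (hb : ∀ k < L, ∀ i, |b k i| ≤ 1) (hx : ∀ i, |x i| ≤ 1) :
    ∀ k ≤ L, ∀ i, |hiddenEval w A b k x i| ≤ ((W : ℝ) + 1) ^ k := by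
  intro k
  induction k with
  | zero => simpa [hiddenEval] using hx
  | succ k ih =>
    intro (hk : k < L) i
    have hwk : (w k : ℝ) ≤ W := by exact_mod_cast hw k hk
    have hpow : (1 : ℝ) ≤ ((W : ℝ) + 1) ^ k := one_le_pow₀ (by simp)
    rw [hiddenEval_succ_apply]
    calc |max (preActivation w A b k x i) 0|
        ≤ |preActivation w A b k x i| :=
          (abs_of_nonneg (le_max_right _ _)).trans_le (max_le (le_abs_self _) (abs_nonneg _))
      _ ≤ |(A k *ᵥ hiddenEval w A b k x) i| + |b k i| := abs_add_le _ _
      _ ≤ w k * (1 * ((W : ℝ) + 1) ^ k) + 1 := by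
          gcongr
          · simpa using abs_mulVec_apply_le (hA k hk) (ih hk.le) i
          · exact hb k hk i
      _ ≤ W * ((W : ℝ) + 1) ^ k + ((W : ℝ) + 1) ^ k := by rw [one_mul]; gcongr
      _ = ((W : ℝ) + 1) ^ (k + 1) := by ring

theorem abs_preActivation_sub_le (hδ : 0 ≤ δ) (hw : ∀ k < L, w k ≤ W)
    (hA : ∀ k < L, ∀ i j, |A k i j| ≤ 1) (hA' : ∀ k < L, ∀ i j, |A' k i j| ≤ 1)
    (hb' : ∀ k < L, ∀ i, |b' k i| ≤ 1)
    (hdA : ∀ k < L, ∀ i j, |A k i j - A' k i j| ≤ δ) (hdb : ∀ k < L, ∀ i, |b k i - b' k i| ≤ δ)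
    (hx : ∀ i, |x i| ≤ 1) {k : ℕ} (hk : k < L)
    (hD : ∀ i, |hiddenEval w A b k x i - hiddenEval w A' b' k x i| ≤ k * ((W : ℝ) + 1) ^ k * δ)
    (i : Fin (w (k + 1))) :
    |preActivation w A b k x i - preActivation w A' b' k x i|
      ≤ ((k : ℝ) + 1) * ((W : ℝ) + 1) ^ (k + 1) * δ := by
  have hwk : (w k : ℝ) ≤ W := by exact_mod_cast hw k hk
  have hpow : (1 : ℝ) ≤ ((W : ℝ) + 1) ^ k := one_le_pow₀ (by simp)
  have hM := abs_hiddenEval_le hw hA' hb' hx k hk.le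
  calc |preActivation w A b k x i - preActivation w A' b' k x i|
      = |((A k *ᵥ hiddenEval w A b k x) i - (A' k *ᵥ hiddenEval w A' b' k x) i)
          + (b k i - b' k i)| := by
        simp only [preActivation, Pi.add_apply]; congr 1; ring
    _ ≤ |(A k *ᵥ hiddenEval w A b k x) i - (A' k *ᵥ hiddenEval w A' b' k x) i|
          + |b k i - b' k i| := abs_add_le _ _
    _ ≤ w k * (1 * (k * ((W : ℝ) + 1) ^ k * δ) + δ * ((W : ℝ) + 1) ^ k) + δ := by
        gcongr
        · simpa using abs_mulVec_sub_mulVec_apply_le (hA k hk) (hdA k hk) hM hD i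
        · exact hdb k hk i
    _ ≤ W * ((k + 1) * ((W : ℝ) + 1) ^ k * δ) + (k + 1) * ((W : ℝ) + 1) ^ k * δ := by
        have hδpow : δ ≤ (k + 1) * ((W : ℝ) + 1) ^ k * δ :=
          le_mul_of_one_le_left hδ (one_le_mul_of_one_le_of_one_le (by simp) hpow)
        have hlin : 1 * (k * ((W : ℝ) + 1) ^ k * δ) + δ * ((W : ℝ) + 1) ^ k
            = (k + 1) * ((W : ℝ) + 1) ^ k * δ := by ring
        rw [hlin]; gcongr
    _ = ((k : ℝ) + 1) * ((W : ℝ) + 1) ^ (k + 1) * δ := by ring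

theorem abs_hiddenEval_sub_le (hδ : 0 ≤ δ) (hw : ∀ k < L, w k ≤ W)
    (hA : ∀ k < L, ∀ i j, |A k i j| ≤ 1) (hA' : ∀ k < L, ∀ i j, |A' k i j| ≤ 1)
    (hb' : ∀ k < L, ∀ i, |b' k i| ≤ 1)
    (hdA : ∀ k < L, ∀ i j, |A k i j - A' k i j| ≤ δ) (hdb : ∀ k < L, ∀ i, |b k i - b' k i| ≤ δ)
    (hx : ∀ i, |x i| ≤ 1) :
    ∀ k ≤ L, ∀ i,
      |hiddenEval w A b k x i - hiddenEval w A' b' k x i| ≤ k * ((W : ℝ) + 1) ^ k * δ := by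
  intro k
  induction k with
  | zero => simp [hiddenEval]
  | succ k ih =>
    intro (hk : k < L) i
    rw [hiddenEval_succ_apply, hiddenEval_succ_apply, Nat.cast_succ]
    exact (abs_max_sub_max_le_abs _ _ _).trans
      (abs_preActivation_sub_le hδ hw hA hA' hb' hdA hdb hx hk (ih hk.le) i)

end Network

theorem network_param_perturbation_general (W L : ℕ) (δ : ℝ) (hδ : 0 ≤ δ)
    (w : ℕ → ℕ) (hwW : ∀ k ≤ L, w k ≤ W)
    (A A' : ∀ k : ℕ, Matrix (Fin (w (k + 1))) (Fin (w k)) ℝ)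
    (b b' : ∀ k : ℕ, Fin (w (k + 1)) → ℝ)
    (hA : ∀ k < L, ∀ i j, |A k i j| ≤ 1) (hA' : ∀ k < L, ∀ i j, |A' k i j| ≤ 1)
    (hb' : ∀ k < L, ∀ i, |b' k i| ≤ 1)
    (hdA : ∀ k < L, ∀ i j, |A k i j - A' k i j| ≤ δ)
    (hdb : ∀ k < L, ∀ i, |b k i - b' k i| ≤ δ)
    (x : Fin (w 0) → ℝ) (hx : ∀ i, x i ∈ Set.Icc (0:ℝ) 1) :
    ∀ i, |netEval w A b L x i - netEval w A' b' L x i| ≤ L * (W + 1) ^ L * δ := by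
  have hw : ∀ k < L, w k ≤ W := fun k hk => hwW k hk.le
  have hx1 : ∀ i, |x i| ≤ 1 := fun i => abs_le.2 ⟨by linarith [(hx i).1], (hx i).2⟩
  cases L with
  | zero => simp [netEval]
  | succ m =>
    intro i
    rw [netEval_succ, netEval_succ, Nat.cast_succ]
    exact abs_preActivation_sub_le hδ hw hA hA' hb' hdA hdb hx1 m.lt_succ_self
      (abs_hiddenEval_sub_le hδ hw hA hA' hb' hdA hdb hx1 m m.lt_succ_self.le) i

theorem network_param_perturbation (K W L : ℕ) (hL : 1 ≤ L) (δ : ℝ) (hδ : 0 ≤ δ)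
    (w : ℕ → ℕ) (hw0 : w 0 = K) (hwL : w L = K) (hwW : ∀ k ≤ L, w k ≤ W)
    (A A' : ∀ k : ℕ, Matrix (Fin (w (k + 1))) (Fin (w k)) ℝ)
    (b b' : ∀ k : ℕ, Fin (w (k + 1)) → ℝ)
    (hA : ∀ k < L, ∀ i j, |A k i j| ≤ 1) (hA' : ∀ k < L, ∀ i j, |A' k i j| ≤ 1)
    (hb : ∀ k < L, ∀ i, |b k i| ≤ 1) (hb' : ∀ k < L, ∀ i, |b' k i| ≤ 1)
    (hdA : ∀ k < L, ∀ i j, |A k i j - A' k i j| ≤ δ)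
    (hdb : ∀ k < L, ∀ i, |b k i - b' k i| ≤ δ)
    (x : Fin (w 0) → ℝ) (hx : ∀ i, x i ∈ Set.Icc (0:ℝ) 1) :
    ∀ i, |netEval w A b L x i - netEval w A' b' L x i| ≤ L * (W + 1) ^ L * δ :=
  network_param_perturbation_general W L δ hδ w hwW A A' b b' hA hA' hb' hdA hdb x hx
end
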